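/- arXiv:2206.06805 — 4 statements merged into one kernel-verified Lean document; each statement's English description precedes it below -/
import Mathlib

section
/- For vectors x, y ∈ ℂ^N, scalars z, γ ∈ ℂ with z ≠ 0, real constants c₁, c₂ ≠ 0, and C = c₁ y yᴴ + c₂ I invertible, the minimum over γ of (x − y z γ)ᴴ C⁻¹ (x − y z γ) equals (x − (1/(yᴴy)) y yᴴ x)ᴴ C⁻¹ (x − (1/(yᴴy)) y yᴴ x), provided y ≠ 0. -/
open Matrix
open scoped ComplexOrder

/-- Lemma 1: the minimum over `γ` of the quadratic form `(x - y z γ)ᴴ C⁻¹ (x - y z γ)`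
with `C = c₁ y yᴴ + c₂ I` positive definite equals the value at the projection
`x - (1/(yᴴy)) y yᴴ x`. -/
theorem stmt_0 {N : ℕ} (x y : Fin N → ℂ) (hy : y ≠ 0) (z : ℂ) (hz : z ≠ 0)
    (c₁ c₂ : ℝ) (hc₁ : c₁ ≠ 0) (hc₂ : c₂ ≠ 0)
    (C : Matrix (Fin N) (Fin N) ℂ)
    (hC : C = (c₁ : ℂ) • vecMulVec y (star y) + (c₂ : ℂ) • (1 : Matrix (Fin N) (Fin N) ℂ))
    (hCpd : C.PosDef) :
    IsLeast
      (Set.range fun γ : ℂ =>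
        (star (x - z • γ • y) ⬝ᵥ (C⁻¹ *ᵥ (x - z • γ • y))).re)
      ((star (x - ((star y ⬝ᵥ x) / (star y ⬝ᵥ y)) • y) ⬝ᵥ
        (C⁻¹ *ᵥ (x - ((star y ⬝ᵥ x) / (star y ⬝ᵥ y)) • y))).re) := by
  have hs : (star y ⬝ᵥ y : ℂ) ≠ 0 := fun h => hy (dotProduct_star_self_eq_zero.mp h)
  set s : ℂ := star y ⬝ᵥ y with hs_def
  set p : ℂ := (star y ⬝ᵥ x) / s with hp_def
  set w : Fin N → ℂ := x - p • y with hw_def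
  have hyw : star y ⬝ᵥ w = 0 := by
    rw [hw_def, dotProduct_sub, dotProduct_smul, hp_def, smul_eq_mul, ← hs_def,
      div_mul_cancel₀ _ hs, sub_self]
  have hwy : star w ⬝ᵥ y = 0 := by
    rw [star_dotProduct, hyw, star_zero]
  -- C *ᵥ y = α • y
  set α : ℂ := (c₁ : ℂ) * s + (c₂ : ℂ) with hα_def
  have hvv : vecMulVec y (star y) *ᵥ y = s • y := by
    funext i
    simp only [mulVec, dotProduct, vecMulVec_apply, Pi.smul_apply, smul_eq_mul, hs_def]
    rw [Finset.sum_mul]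
    exact Finset.sum_congr rfl fun j _ => by ring
  have hCy : C *ᵥ y = α • y := by
    rw [hC, Matrix.add_mulVec, Matrix.smul_mulVec, Matrix.smul_mulVec,
      Matrix.one_mulVec, hvv, smul_smul, hα_def, add_smul]
  have hαs : α * s = star y ⬝ᵥ (C *ᵥ y) := by
    rw [hCy, dotProduct_smul, smul_eq_mul, hs_def]
  have hα : α ≠ 0 := by
    intro h
    have := hCpd.dotProduct_mulVec_pos hy
    rw [← hαs, h, zero_mul] at this
    exact lt_irrefl 0 this
  -- C⁻¹ *ᵥ y = α⁻¹ • y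
  have hinvmul : C⁻¹ * C = 1 := Matrix.nonsing_inv_mul C (Matrix.isUnit_iff_isUnit_det C |>.1 hCpd.isUnit)
  have hCinvy : C⁻¹ *ᵥ y = α⁻¹ • y := by
    have h1 : C⁻¹ *ᵥ (C *ᵥ y) = y := by
      rw [Matrix.mulVec_mulVec, hinvmul, Matrix.one_mulVec]
    rw [hCy, Matrix.mulVec_smul] at h1
    symm
    rw [inv_smul_eq_iff₀ hα]
    exact h1.symm
  have hCinvHerm : C⁻¹.IsHermitian := hCpd.isHermitian.inv
  -- cross terms vanish
  have hcross1 : ∀ t : ℂ, star w ⬝ᵥ (C⁻¹ *ᵥ (t • y)) = 0 := by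
    intro t
    rw [Matrix.mulVec_smul, hCinvy, dotProduct_smul, dotProduct_smul, hwy,
      smul_zero, smul_zero]
  have hcross2 : star y ⬝ᵥ (C⁻¹ *ᵥ w) = 0 := by
    rw [Matrix.dotProduct_mulVec]
    have : star y ᵥ* C⁻¹ = star (C⁻¹ *ᵥ y) := by
      rw [Matrix.star_mulVec, hCinvHerm.eq]
    rw [this, hCinvy]
    simp only [star_smul, smul_dotProduct, hyw, smul_eq_mul, mul_zero]
  -- key decomposition
  have key : ∀ t : ℂ,
      star (w + t • y) ⬝ᵥ (C⁻¹ *ᵥ (w + t • y)) =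
      star w ⬝ᵥ (C⁻¹ *ᵥ w) + star (t • y) ⬝ᵥ (C⁻¹ *ᵥ (t • y)) := by
    intro t
    have h2 : star (t • y) ⬝ᵥ (C⁻¹ *ᵥ w) = 0 := by
      rw [star_smul, smul_dotProduct, hcross2, smul_zero]
    rw [Matrix.mulVec_add, star_add, add_dotProduct, dotProduct_add,
      dotProduct_add, hcross1 t, h2]
    ring
  constructor
  · refine ⟨p / z, ?_⟩
    show (star (x - z • (p / z) • y) ⬝ᵥ (C⁻¹ *ᵥ (x - z • (p / z) • y))).re = _
    rw [smul_smul, mul_div_cancel₀ _ hz, ← hw_def]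
  · rintro r ⟨γ, rfl⟩
    have hdecomp : x - z • γ • y = w + (p - z * γ) • y := by
      rw [hw_def]
      funext i
      simp only [Pi.sub_apply, Pi.add_apply, Pi.smul_apply, smul_eq_mul]
      ring
    simp only [hdecomp, key (p - z * γ)]
    have hnn : 0 ≤ (star ((p - z * γ) • y) ⬝ᵥ (C⁻¹ *ᵥ ((p - z * γ) • y))).re := by
      have := hCpd.inv.posSemidef.dotProduct_mulVec_nonneg ((p - z * γ) • y)
      rw [Complex.le_def] at this
      simpa using this.1
    rw [Complex.add_re]
    exact le_add_of_nonneg_right hnn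
end

section
/- The minimizer of the quadratic form (x − y z γ)ᴴ C⁻¹ (x − y z γ) over γ ∈ ℂ, where C = c₁ y yᴴ + c₂ I is positive definite and z ≠ 0, y ≠ 0, is γ̂ = (1/z) (yᴴ x)/(yᴴ y). -/
open Matrix
open scoped ComplexOrder

/-- The minimizer of the quadratic form `(x − y z γ)ᴴ C⁻¹ (x − y z γ)` over `γ ∈ ℂ`,
where `C = c₁ y yᴴ + c₂ I` is positive definite, `z ≠ 0`, `y ≠ 0`,
is `γ̂ = (1/z)(yᴴ x)/(yᴴ y)`. -/
theorem stmt_2 {N : ℕ} (x y : Fin N → ℂ) (hy : y ≠ 0) (z : ℂ) (hz : z ≠ 0)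
    (c₁ c₂ : ℝ)
    (C : Matrix (Fin N) (Fin N) ℂ)
    (hC : C = (c₁ : ℂ) • vecMulVec y (star y) + (c₂ : ℂ) • (1 : Matrix (Fin N) (Fin N) ℂ))
    (hCpd : C.PosDef) :
    ∀ γ : ℂ,
      (star (x - z • ((1 / z) * (star y ⬝ᵥ x) / (star y ⬝ᵥ y)) • y) ⬝ᵥ
        (C⁻¹ *ᵥ (x - z • ((1 / z) * (star y ⬝ᵥ x) / (star y ⬝ᵥ y)) • y))).re ≤
      (star (x - z • γ • y) ⬝ᵥ (C⁻¹ *ᵥ (x - z • γ • y))).re := by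
  intro γ
  set k : ℂ := star y ⬝ᵥ x with hk
  set n : ℂ := star y ⬝ᵥ y with hn
  have hn0 : n ≠ 0 := by
    simpa [hn, dotProduct_star_self_eq_zero] using hy
  have hzg : z * ((1 / z) * k / n) = k / n := by field_simp
  set A := C⁻¹ with hA
  have hApd : A.PosDef := hCpd.inv
  have hAH : Aᴴ = A := hApd.isHermitian
  -- eigenvector fact
  have hCy : C *ᵥ y = ((c₁ : ℂ) * n + c₂) • y := by
    subst hC
    funext i
    simp [mulVec, dotProduct, vecMulVec_apply, Matrix.one_apply, Finset.mul_sum,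
      Finset.sum_add_distrib, mul_add, add_mul, mul_comm, mul_left_comm, mul_assoc, hn]
  have hlam : ((c₁ : ℂ) * n + c₂) ≠ 0 := by
    intro h
    have := hCpd.dotProduct_mulVec_pos hy
    rw [hCy, h, zero_smul, dotProduct_zero] at this
    exact lt_irrefl 0 this
  have hAy : A *ᵥ y = ((c₁ : ℂ) * n + c₂)⁻¹ • y := by
    have hdet : IsUnit C.det := isUnit_iff_ne_zero.mpr (ne_of_gt hCpd.det_pos)
    have : A *ᵥ (C *ᵥ y) = y := by
      rw [mulVec_mulVec, hA, Matrix.nonsing_inv_mul C hdet, one_mulVec]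
    rw [hCy, mulVec_smul] at this
    rw [eq_inv_smul_iff₀ hlam]
    exact this
  -- residual
  set r : Fin N → ℂ := x - (k / n) • y with hr
  have hyr : star y ⬝ᵥ r = 0 := by
    simp only [hr, dotProduct_sub, dotProduct_smul, ← hk, ← hn, smul_eq_mul]
    field_simp
    ring
  have hry : star r ⬝ᵥ y = 0 := by
    rw [star_dotProduct, hyr, star_zero]
  set w : ℂ := k / n - z * γ with hw
  have hdecomp : x - z • γ • y = r + w • y := by
    rw [hr, hw]
    funext i
    simp [sub_smul, smul_smul]
  have hcross1 : star r ⬝ᵥ (A *ᵥ (w • y)) = 0 := by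
    rw [mulVec_smul, hAy, dotProduct_smul, dotProduct_smul, hry]
    simp
  have hcross2 : star (w • y) ⬝ᵥ (A *ᵥ r) = 0 := by
    have hvm : star y ᵥ* A = star (A *ᵥ y) := by
      rw [star_mulVec, hAH]
    rw [star_smul, smul_dotProduct, dotProduct_mulVec, hvm, hAy, star_smul,
      smul_dotProduct, smul_eq_mul, hyr]
    simp
  have hquad : 0 ≤ (star (w • y) ⬝ᵥ (A *ᵥ (w • y))).re := by
    have := hApd.posSemidef.dotProduct_mulVec_nonneg (w • y)
    exact (Complex.le_def.mp this).1
  have hmin : x - z • ((1 / z) * k / n) • y = r := by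
    rw [hr, smul_smul, hzg]
  rw [hmin, hdecomp]
  have hexp : star (r + w • y) ⬝ᵥ (A *ᵥ (r + w • y)) =
      star r ⬝ᵥ (A *ᵥ r) + star (w • y) ⬝ᵥ (A *ᵥ (w • y)) := by
    rw [star_add, mulVec_add, add_dotProduct, dotProduct_add, dotProduct_add,
      hcross1, hcross2]
    ring
  rw [hexp, Complex.add_re]
  linarith
end

section
/- For a unit vector s̄ ∈ ℂ^S (‖s̄‖ = 1), σ² > 0, c ≥ 0, and C₁ = c s̄ s̄ᴴ + σ² I, C₀ = σ² I, the detection metric xᴴ(C₀⁻¹ − C₁⁻¹)x − xᴴ s̄ s̄ᴴ C₁⁻¹ s̄ s̄ᴴ x + xᴴ C₁⁻¹ s̄ s̄ᴴ x + xᴴ s̄ s̄ᴴ C₁⁻¹ x equals (1/σ²)|s̄ᴴ x|² for every x ∈ ℂ^S. -/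
open Matrix

lemma vecMulVec_mulVec' {S : ℕ} (w v x : Fin S → ℂ) :
    vecMulVec w v *ᵥ x = (v ⬝ᵥ x) • w := by
  ext i
  simp [vecMulVec_apply, mulVec, dotProduct, Finset.sum_mul]
  exact Finset.sum_congr rfl fun j _ => by ring

lemma vecMulVec_mul_vecMulVec' {S : ℕ} (w v : Fin S → ℂ) :
    vecMulVec w v * vecMulVec w v = (v ⬝ᵥ w) • vecMulVec w v := by
  ext i j
  simp [vecMulVec_apply, mul_apply, dotProduct, Finset.sum_mul]
  exact Finset.sum_congr rfl fun k _ => by ring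

/-- The GLRT detection metric
`xᴴ(C₀⁻¹ − C₁⁻¹)x − xᴴ s̄ s̄ᴴ C₁⁻¹ s̄ s̄ᴴ x + xᴴ C₁⁻¹ s̄ s̄ᴴ x + xᴴ s̄ s̄ᴴ C₁⁻¹ x`
with `C₀ = σ² I` and `C₁ = c s̄ s̄ᴴ + σ² I` simplifies to the correlation detector
`(1/σ²)|s̄ᴴ x|²`. -/
theorem stmt_3 {S : ℕ} (sbar : Fin S → ℂ) (hs : star sbar ⬝ᵥ sbar = 1)
    (σsq : ℝ) (hσ : 0 < σsq) (c : ℝ) (hc : 0 ≤ c)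
    (C0 C1 : Matrix (Fin S) (Fin S) ℂ)
    (hC0 : C0 = (σsq : ℂ) • (1 : Matrix (Fin S) (Fin S) ℂ))
    (hC1 : C1 = (c : ℂ) • vecMulVec sbar (star sbar) +
      (σsq : ℂ) • (1 : Matrix (Fin S) (Fin S) ℂ)) :
    ∀ x : Fin S → ℂ,
      star x ⬝ᵥ ((C0⁻¹ - C1⁻¹) *ᵥ x)
        - (star x ⬝ᵥ sbar) * (star sbar ⬝ᵥ (C1⁻¹ *ᵥ sbar)) * (star sbar ⬝ᵥ x)
        + (star x ⬝ᵥ (C1⁻¹ *ᵥ sbar)) * (star sbar ⬝ᵥ x)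
        + (star x ⬝ᵥ sbar) * (star sbar ⬝ᵥ (C1⁻¹ *ᵥ x))
      = (‖star sbar ⬝ᵥ x‖ ^ 2 / σsq : ℝ) := by
  intro x
  have hσ0 : (σsq : ℂ) ≠ 0 := by exact_mod_cast hσ.ne'
  have hσc : ((σsq : ℂ) + (c : ℂ)) ≠ 0 := by
    have : (0:ℝ) < σsq + c := by linarith
    intro h
    have := congrArg Complex.re h
    push_cast at this
    simp at this
    linarith
  set P : Matrix (Fin S) (Fin S) ℂ := vecMulVec sbar (star sbar) with hP
  have hPP : P * P = P := by
    rw [hP, vecMulVec_mul_vecMulVec', hs, one_smul]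
  have hC0inv : C0⁻¹ = (σsq : ℂ)⁻¹ • (1 : Matrix (Fin S) (Fin S) ℂ) := by
    apply inv_eq_right_inv
    rw [hC0, smul_mul_assoc, mul_smul_comm, smul_smul, mul_inv_cancel₀ hσ0, one_smul, one_mul]
  set k : ℂ := (c : ℂ) / ((σsq : ℂ) * ((σsq : ℂ) + (c : ℂ))) with hk
  have hC1inv : C1⁻¹ = (σsq : ℂ)⁻¹ • (1 : Matrix (Fin S) (Fin S) ℂ) - k • P := by
    apply inv_eq_right_inv
    rw [hC1]
    have expand : ((c:ℂ) • P + (σsq:ℂ) • 1) * ((σsq:ℂ)⁻¹ • 1 - k • P)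
        = ((c:ℂ)*(σsq:ℂ)⁻¹ - (c:ℂ)*k - (σsq:ℂ)*k) • P + ((σsq:ℂ)*(σsq:ℂ)⁻¹) • (1 : Matrix (Fin S) (Fin S) ℂ) := by
      simp only [mul_sub, add_mul, smul_mul_assoc, mul_smul_comm, hPP, mul_one, one_mul, smul_smul]
      module
    rw [expand]
    have h1 : (c:ℂ)*(σsq:ℂ)⁻¹ - (c:ℂ)*k - (σsq:ℂ)*k = 0 := by
      rw [hk]; field_simp; ring
    rw [h1, zero_smul, mul_inv_cancel₀ hσ0, one_smul, zero_add]
  have hPx : ∀ y : Fin S → ℂ, P *ᵥ y = (star sbar ⬝ᵥ y) • sbar := fun y => vecMulVec_mulVec' _ _ _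
  set a : ℂ := star sbar ⬝ᵥ x with ha
  have hconj : star x ⬝ᵥ sbar = starRingEnd ℂ a := by
    rw [ha]
    simp [dotProduct, map_sum, mul_comm]
  rw [hC0inv, hC1inv, sub_sub_cancel]
  simp only [Matrix.sub_mulVec, Matrix.smul_mulVec, Matrix.one_mulVec, hPx, hs, one_smul,
    dotProduct_sub, dotProduct_smul, smul_dotProduct, smul_eq_mul, hconj, ← ha]
  have habs : starRingEnd ℂ a * a = ((‖a‖)^2 : ℝ) := by
    rw [Complex.sq_norm]
    exact_mod_cast (Complex.normSq_eq_conj_mul_self (z := a)).symm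
  push_cast
  push_cast at habs
  rw [← habs]
  field_simp
  ring
end

section
/- For a ≥ 0 and b > 0, the first-order Marcum Q function satisfies Q₁(a, b) > Q(b + a) + Q(b − a), where Q is the Gaussian tail function; in particular Q₁(a, b) > Q(b − a). -/
/-- The modified Bessel function of the first kind of order 0,
via its standard integral representation. -/
noncomputable def besselI0 (x : ℝ) : ℝ :=
  (1 / Real.pi) * ∫ θ in (0:ℝ)..Real.pi, Real.exp (x * Real.cos θ)

/-- The first-order Marcum Q function `Q₁(a,b) = ∫_b^∞ t e^{−(t²+a²)/2} I₀(at) dt`. -/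
noncomputable def marcumQ (a b : ℝ) : ℝ :=
  ∫ t in Set.Ioi b, t * Real.exp (-(t ^ 2 + a ^ 2) / 2) * besselI0 (a * t)

/-- The Gaussian Q-function `Q(x) = (1/√(2π)) ∫_x^∞ e^{−t²/2} dt`. -/
noncomputable def gaussQ (x : ℝ) : ℝ :=
  (1 / Real.sqrt (2 * Real.pi)) * ∫ t in Set.Ioi x, Real.exp (-(t ^ 2) / 2)

open Real MeasureTheory Set Filter

noncomputable def besselI1 (x : ℝ) : ℝ :=
  (1 / Real.pi) * ∫ θ in (0:ℝ)..Real.pi, Real.cos θ * Real.exp (x * Real.cos θ)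

noncomputable def besselJ (x : ℝ) : ℝ :=
  (1 / Real.pi) * ∫ θ in (0:ℝ)..Real.pi, (Real.sin θ)^2 * Real.exp (x * Real.cos θ)

lemma hasDerivAt_par (g : ℝ → ℝ) (hg : Continuous g) (hgb : ∀ θ, |g θ| ≤ 1) (x₀ : ℝ) :
    HasDerivAt (fun x => ∫ θ in (0:ℝ)..Real.pi, g θ * Real.exp (x * Real.cos θ))
      (∫ θ in (0:ℝ)..Real.pi, (g θ * Real.cos θ) * Real.exp (x₀ * Real.cos θ)) x₀ := by
  have h := intervalIntegral.hasDerivAt_integral_of_dominated_loc_of_deriv_le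
    (F := fun x θ => g θ * Real.exp (x * Real.cos θ))
    (F' := fun x θ => (g θ * Real.cos θ) * Real.exp (x * Real.cos θ))
    (x₀ := x₀) (a := (0:ℝ)) (b := Real.pi) (μ := volume)
    (bound := fun _ => Real.exp (|x₀| + 1)) (s := Metric.ball x₀ 1) (Metric.ball_mem_nhds x₀ one_pos)
    ?_ ?_ ?_ ?_ ?_ ?_
  · exact h.2
  · filter_upwards with x
    exact ((hg.mul (Real.continuous_exp.comp ((continuous_const.mul Real.continuous_cos)))).aestronglyMeasurable).restrict
  · apply Continuous.intervalIntegrable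
    exact hg.mul (Real.continuous_exp.comp (continuous_const.mul Real.continuous_cos))
  · exact (((hg.mul Real.continuous_cos).mul (Real.continuous_exp.comp (continuous_const.mul Real.continuous_cos))).aestronglyMeasurable).restrict
  · filter_upwards with θ hθ x hx
    have hxb : |x| ≤ |x₀| + 1 := by
      have := abs_sub_abs_le_abs_sub x x₀
      have hd : |x - x₀| < 1 := by simpa [Real.dist_eq] using hx
      linarith
    have h1 : |g θ * Real.cos θ| ≤ 1 := by
      calc |g θ * Real.cos θ| = |g θ| * |Real.cos θ| := abs_mul _ _
        _ ≤ 1 * 1 := by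
            exact mul_le_mul (hgb θ) (Real.abs_cos_le_one θ) (abs_nonneg _) zero_le_one
        _ = 1 := one_mul 1
    have h2 : Real.exp (x * Real.cos θ) ≤ Real.exp (|x₀| + 1) := by
      apply Real.exp_le_exp.2
      calc x * Real.cos θ ≤ |x * Real.cos θ| := le_abs_self _
        _ = |x| * |Real.cos θ| := abs_mul _ _
        _ ≤ (|x₀| + 1) * 1 :=
            mul_le_mul hxb (Real.abs_cos_le_one θ) (abs_nonneg _) (by positivity)
        _ = |x₀| + 1 := mul_one _
    calc ‖g θ * Real.cos θ * Real.exp (x * Real.cos θ)‖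
        = |g θ * Real.cos θ| * Real.exp (x * Real.cos θ) := by
          rw [Real.norm_eq_abs, abs_mul, abs_of_pos (Real.exp_pos _)]
      _ ≤ 1 * Real.exp (|x₀| + 1) := by
          exact mul_le_mul h1 h2 (Real.exp_pos _).le zero_le_one
      _ = Real.exp (|x₀| + 1) := one_mul _
  · apply intervalIntegrable_const
  · filter_upwards with θ hθ x hx
    have : HasDerivAt (fun y : ℝ => y * Real.cos θ) (Real.cos θ) x := by
      simpa using (hasDerivAt_id x).mul_const (Real.cos θ)
    have := (this.exp).const_mul (g θ)
    exact this.congr_deriv (by ring)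

lemma hasDerivAt_besselI0 (x : ℝ) : HasDerivAt besselI0 (besselI1 x) x := by
  have h := (hasDerivAt_par (fun _ => 1) continuous_const (fun θ => by norm_num) x).const_mul (1 / Real.pi)
  have h1 : besselI1 x = (1/Real.pi) * ∫ θ in (0:ℝ)..Real.pi, ((1:ℝ) * Real.cos θ) * Real.exp (x * Real.cos θ) := by
    unfold besselI1; norm_num
  have h0 : besselI0 = fun y => (1/Real.pi) * ∫ θ in (0:ℝ)..Real.pi, (1:ℝ) * Real.exp (y * Real.cos θ) := by
    funext y; unfold besselI0; norm_num
  rw [h1, h0]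
  exact h

lemma hasDerivAt_besselI1 (x : ℝ) :
    HasDerivAt besselI1 (besselI0 x - besselJ x) x := by
  have h := (hasDerivAt_par Real.cos Real.continuous_cos (fun θ => Real.abs_cos_le_one θ) x).const_mul (1 / Real.pi)
  have he : (1 / Real.pi) * ∫ θ in (0:ℝ)..Real.pi, (Real.cos θ * Real.cos θ) * Real.exp (x * Real.cos θ)
      = besselI0 x - besselJ x := by
    unfold besselI0 besselJ
    rw [← mul_sub]
    congr 1
    rw [← intervalIntegral.integral_sub]
    · congr 1; ext θ
      have : Real.sin θ ^ 2 = 1 - Real.cos θ ^ 2 := by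
        have := Real.sin_sq_add_cos_sq θ; linarith
      rw [this]; ring
    · exact (Real.continuous_exp.comp (continuous_const.mul Real.continuous_cos)).intervalIntegrable _ _
    · exact ((Real.continuous_sin.pow 2).mul (Real.continuous_exp.comp (continuous_const.mul Real.continuous_cos))).intervalIntegrable _ _
  rw [he] at h
  exact h

lemma besselI1_eq (x : ℝ) : besselI1 x = x * besselJ x := by
  unfold besselI1 besselJ
  rw [show x * ((1 / Real.pi) * ∫ θ in (0:ℝ)..Real.pi, (Real.sin θ)^2 * Real.exp (x * Real.cos θ))
    = (1 / Real.pi) * (x * ∫ θ in (0:ℝ)..Real.pi, (Real.sin θ)^2 * Real.exp (x * Real.cos θ)) by ring]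
  congr 1
  rw [← intervalIntegral.integral_const_mul]
  have key : ∀ θ ∈ Set.uIcc (0:ℝ) Real.pi,
      HasDerivAt (fun θ => Real.sin θ * Real.exp (x * Real.cos θ))
        (Real.cos θ * Real.exp (x * Real.cos θ)
          - x * ((Real.sin θ)^2 * Real.exp (x * Real.cos θ))) θ := by
    intro θ _
    have h1 : HasDerivAt (fun θ : ℝ => x * Real.cos θ) (x * (-Real.sin θ)) θ :=
      (Real.hasDerivAt_cos θ).const_mul x
    have h2 := (Real.hasDerivAt_sin θ).mul h1.exp
    exact h2.congr_deriv (by ring)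
  have hcont : IntervalIntegrable
      (fun θ => Real.cos θ * Real.exp (x * Real.cos θ)
        - x * ((Real.sin θ)^2 * Real.exp (x * Real.cos θ))) volume 0 Real.pi := by
    apply Continuous.intervalIntegrable
    continuity
  have h := intervalIntegral.integral_eq_sub_of_hasDerivAt key hcont
  simp only [Real.sin_pi, Real.sin_zero, zero_mul, sub_zero] at h
  have hi1 : IntervalIntegrable (fun θ => Real.cos θ * Real.exp (x * Real.cos θ)) volume 0 Real.pi := by
    apply Continuous.intervalIntegrable; continuity
  have hi2 : IntervalIntegrable (fun θ => x * ((Real.sin θ)^2 * Real.exp (x * Real.cos θ))) volume 0 Real.pi := by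
    apply Continuous.intervalIntegrable; continuity
  rw [intervalIntegral.integral_sub hi1 hi2] at h
  linarith [h]

lemma besselI0_sub_besselI1_nonneg (x : ℝ) : 0 ≤ besselI0 x - besselI1 x := by
  unfold besselI0 besselI1
  have hi1 : IntervalIntegrable (fun θ => Real.exp (x * Real.cos θ)) volume 0 Real.pi := by
    apply Continuous.intervalIntegrable; continuity
  have hi2 : IntervalIntegrable (fun θ => Real.cos θ * Real.exp (x * Real.cos θ)) volume 0 Real.pi := by
    apply Continuous.intervalIntegrable; continuity
  rw [← mul_sub, ← intervalIntegral.integral_sub hi1 hi2]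
  apply mul_nonneg (by positivity)
  apply intervalIntegral.integral_nonneg Real.pi_pos.le
  intro θ _
  have h1 : Real.cos θ ≤ 1 := Real.cos_le_one θ
  have h2 : (0:ℝ) < Real.exp (x * Real.cos θ) := Real.exp_pos _
  nlinarith

noncomputable def besselD (x : ℝ) : ℝ := besselI0 x + x * besselI1 x - x * besselI0 x

lemma hasDerivAt_besselD (x : ℝ) :
    HasDerivAt besselD ((x - 1) * (besselI0 x - besselI1 x)) x := by
  have h0 := hasDerivAt_besselI0 x
  have h1 := hasDerivAt_besselI1 x
  have h := (h0.add (((hasDerivAt_id x).mul h1))).sub ((hasDerivAt_id x).mul h0)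
  have hJ : besselJ x * x = besselI1 x := by rw [mul_comm, ← besselI1_eq]
  exact h.congr_deriv (by simp only [id]; nlinarith [besselI1_eq x])

lemma besselD_lower {x : ℝ} (hx : 0 ≤ x) : besselI1 1 ≤ besselD x := by
  have hcont : Continuous besselD := by
    have : Differentiable ℝ besselD := fun y => (hasDerivAt_besselD y).differentiableAt
    exact this.continuous
  have hD1 : besselD 1 = besselI1 1 := by unfold besselD; ring
  rcases le_total x 1 with h | h
  · have hanti : AntitoneOn besselD (Set.Icc 0 1) := by
      apply antitoneOn_of_deriv_nonpos (convex_Icc 0 1) (hcont.continuousOn)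
      · intro y hy
        exact (hasDerivAt_besselD y).differentiableAt.differentiableWithinAt
      · intro y hy
        rw [(hasDerivAt_besselD y).deriv]
        rw [interior_Icc] at hy
        have hy1 : y < 1 := hy.2
        have := besselI0_sub_besselI1_nonneg y
        nlinarith
    have := hanti (Set.mem_Icc.2 ⟨hx, h⟩) (Set.mem_Icc.2 ⟨zero_le_one, le_refl 1⟩) h
    rw [hD1] at this; exact this
  · have hmono : MonotoneOn besselD (Set.Ici 1) := by
      apply monotoneOn_of_deriv_nonneg (convex_Ici 1) (hcont.continuousOn)
      · intro y hy
        exact (hasDerivAt_besselD y).differentiableAt.differentiableWithinAt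
      · intro y hy
        rw [(hasDerivAt_besselD y).deriv]
        rw [interior_Ici] at hy
        have hy1 : 1 < y := hy
        have := besselI0_sub_besselI1_nonneg y
        nlinarith
    have := hmono (Set.mem_Ici.2 (le_refl 1)) (Set.mem_Ici.2 h) h
    rw [hD1] at this; exact this

lemma besselI1_one_pos : 0 < besselI1 1 := by
  unfold besselI1
  apply mul_pos (by positivity)
  have hsplit : ∫ θ in (0:ℝ)..Real.pi, Real.cos θ * Real.exp (1 * Real.cos θ)
      = (∫ θ in (0:ℝ)..(Real.pi/2), Real.cos θ * Real.exp (1 * Real.cos θ))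
        + ∫ θ in (Real.pi/2)..Real.pi, Real.cos θ * Real.exp (1 * Real.cos θ) := by
    rw [intervalIntegral.integral_add_adjacent_intervals] <;>
      (apply Continuous.intervalIntegrable; continuity)
  have hrefl : ∫ θ in (Real.pi/2)..Real.pi, Real.cos θ * Real.exp (1 * Real.cos θ)
      = ∫ θ in (0:ℝ)..(Real.pi/2), (- Real.cos θ) * Real.exp (- (1 * Real.cos θ)) := by
    have := intervalIntegral.integral_comp_sub_left (a := (0:ℝ)) (b := Real.pi/2)
      (fun θ => Real.cos θ * Real.exp (1 * Real.cos θ)) Real.pi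
    rw [show Real.pi - Real.pi/2 = Real.pi/2 by ring, sub_zero] at this
    rw [← this]
    congr 1; ext θ
    rw [Real.cos_pi_sub]
    ring_nf
  rw [hsplit, hrefl, ← intervalIntegral.integral_add (by apply Continuous.intervalIntegrable; continuity) (by apply Continuous.intervalIntegrable; continuity)]
  apply intervalIntegral.intervalIntegral_pos_of_pos_on
  · apply Continuous.intervalIntegrable; continuity
  · intro θ hθ
    have hc : 0 < Real.cos θ := Real.cos_pos_of_mem_Ioo ⟨by linarith [hθ.1, Real.pi_pos], hθ.2⟩
    have : Real.exp (-(1 * Real.cos θ)) < Real.exp (1 * Real.cos θ) := by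
      apply Real.exp_lt_exp.2; nlinarith
    nlinarith [Real.exp_pos (1 * Real.cos θ), Real.exp_pos (-(1 * Real.cos θ))]
  · linarith [Real.pi_pos]

lemma besselI0_pos (x : ℝ) : 0 < besselI0 x := by
  unfold besselI0
  apply mul_pos (by positivity)
  apply intervalIntegral.intervalIntegral_pos_of_pos_on
  · apply Continuous.intervalIntegrable; continuity
  · intro θ _; exact Real.exp_pos _
  · exact Real.pi_pos

lemma besselI0_le {x : ℝ} (hx : 0 ≤ x) : besselI0 x ≤ Real.exp x := by
  unfold besselI0
  rw [show Real.exp x = (1/Real.pi) * (Real.pi * Real.exp x) by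
    field_simp]
  apply mul_le_mul_of_nonneg_left _ (by positivity)
  calc ∫ θ in (0:ℝ)..Real.pi, Real.exp (x * Real.cos θ)
      ≤ ∫ θ in (0:ℝ)..Real.pi, Real.exp x := by
        apply intervalIntegral.integral_mono_on Real.pi_pos.le
          (by apply Continuous.intervalIntegrable; continuity)
          (intervalIntegrable_const)
        intro θ _
        apply Real.exp_le_exp.2
        nlinarith [Real.cos_le_one θ]
    _ = Real.pi * Real.exp x := by simp

noncomputable def Kc : ℝ := 2 / Real.sqrt (2 * Real.pi)

lemma Kc_pos : 0 < Kc := by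
  unfold Kc
  positivity

noncomputable def gfun (a t : ℝ) : ℝ := t * besselI0 (a*t) - Kc * Real.cosh (a*t)

lemma hasDerivAt_gfun (a t : ℝ) :
    HasDerivAt (gfun a)
      (besselI0 (a*t) + t * (a * besselI1 (a*t)) - Kc * (a * Real.sinh (a*t))) t := by
  have hat : HasDerivAt (fun t : ℝ => a * t) a t := by
    simpa using (hasDerivAt_id t).const_mul a
  have h1 : HasDerivAt (fun t : ℝ => besselI0 (a*t)) (a * besselI1 (a*t)) t := by
    have := (hasDerivAt_besselI0 (a*t)).comp t hat
    exact this.congr_deriv (by ring)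
  have h2 : HasDerivAt (fun t : ℝ => t * besselI0 (a*t))
      (besselI0 (a*t) + t * (a * besselI1 (a*t))) t := by
    have := (hasDerivAt_id t).mul h1
    exact this.congr_deriv (by simp [id])
  have h3 : HasDerivAt (fun t : ℝ => Real.cosh (a*t)) (a * Real.sinh (a*t)) t := by
    have := (Real.hasDerivAt_cosh (a*t)).comp t hat
    exact this.congr_deriv (by ring)
  exact h2.sub (h3.const_mul Kc)

lemma gfun_deriv_pos {a t : ℝ} (ha : 0 ≤ a) (ht : 0 < t) (hg : 0 ≤ gfun a t) :
    0 < besselI0 (a*t) + t * (a * besselI1 (a*t)) - Kc * (a * Real.sinh (a*t)) := by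
  have hKcosh : Kc * Real.cosh (a*t) ≤ t * besselI0 (a*t) := by
    unfold gfun at hg; linarith
  have hsinh : Real.sinh (a*t) ≤ Real.cosh (a*t) := by
    nlinarith [Real.cosh_eq (a*t), Real.sinh_eq (a*t), Real.exp_pos (-(a*t))]
  have h1 : Kc * (a * Real.sinh (a*t)) ≤ a * (t * besselI0 (a*t)) := by
    calc Kc * (a * Real.sinh (a*t)) = a * (Kc * Real.sinh (a*t)) := by ring
      _ ≤ a * (Kc * Real.cosh (a*t)) := by
          apply mul_le_mul_of_nonneg_left _ ha
          exact mul_le_mul_of_nonneg_left hsinh Kc_pos.le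
      _ ≤ a * (t * besselI0 (a*t)) := mul_le_mul_of_nonneg_left hKcosh ha
  have hD : besselI1 1 ≤ besselD (a*t) := besselD_lower (by positivity)
  have hD1 : 0 < besselI1 1 := besselI1_one_pos
  unfold besselD at hD
  nlinarith

lemma gfun_continuous (a : ℝ) : Continuous (gfun a) :=
  Differentiable.continuous (fun t => (hasDerivAt_gfun a t).differentiableAt)

lemma single_crossing {a s t : ℝ} (ha : 0 ≤ a) (hs : 0 < s) (hgs : 0 ≤ gfun a s)
    (hst : s < t) : 0 < gfun a t := by
  -- first: gfun a is nonnegative on [s, ∞)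
  have key : ∀ u, s ≤ u → 0 ≤ gfun a u := by
    by_contra hcon
    push_neg at hcon
    obtain ⟨u, hsu, hu⟩ := hcon
    set Bad : Set ℝ := {v | v ∈ Set.Icc s u ∧ gfun a v < 0} with hBad
    have hne : Bad.Nonempty := ⟨u, ⟨⟨hsu, le_refl u⟩, hu⟩⟩
    have hbdd : BddBelow Bad := ⟨s, fun v hv => hv.1.1⟩
    set T := sInf Bad with hTdef
    have hTs : s ≤ T := le_csInf hne (fun v hv => hv.1.1)
    have hTu : T ≤ u := csInf_le hbdd ⟨⟨hsu, le_refl u⟩, hu⟩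
    have hgT : gfun a T ≤ 0 := by
      have hmem : T ∈ closure Bad := csInf_mem_closure hne hbdd
      have hcl : closure Bad ⊆ {v | gfun a v ≤ 0} :=
        closure_minimal (fun v hv => hv.2.le)
          (isClosed_le (gfun_continuous a) continuous_const)
      exact hcl hmem
    have hpos_before : ∀ v, s ≤ v → v < T → 0 ≤ gfun a v := by
      intro v hv1 hv2
      by_contra hneg
      push_neg at hneg
      have hvu : v ≤ u := le_trans hv2.le hTu
      have := csInf_le hbdd (⟨⟨hv1, hvu⟩, hneg⟩ : v ∈ Bad)
      linarith
    rcases eq_or_lt_of_le hTs with heq | hlt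
    · -- T = s
      have hgs0 : gfun a s = 0 := le_antisymm (heq ▸ hgT) hgs
      have hd_pos := gfun_deriv_pos ha hs hgs
      have hslope := hasDerivAt_iff_tendsto_slope.1 (hasDerivAt_gfun a s)
      have hev : ∀ᶠ v in nhdsWithin s {s}ᶜ, 0 < slope (gfun a) s v :=
        hslope.eventually (eventually_gt_nhds hd_pos)
      have hev' : ∀ᶠ v in nhds s, v ∈ ({s}ᶜ : Set ℝ) → 0 < slope (gfun a) s v :=
        eventually_nhdsWithin_iff.mp hev
      obtain ⟨δ, hδ, hball⟩ := Metric.eventually_nhds_iff.1 hev'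
      have hTlt : T < s + δ := by rw [← heq]; linarith
      obtain ⟨v, hvBad, hvlt⟩ := exists_lt_of_csInf_lt hne hTlt
      have hvs : s ≤ v := hvBad.1.1
      have hvne : v ≠ s := by
        intro heq2; rw [heq2] at hvBad; exact absurd hvBad.2 (by rw [hgs0]; exact lt_irrefl 0)
      have hdist : dist v s < δ := by
        rw [Real.dist_eq, abs_of_nonneg (by linarith)]
        linarith
      have hslope_pos := hball hdist hvne
      rw [slope_def_field] at hslope_pos
      have hvs' : s < v := lt_of_le_of_ne hvs (Ne.symm hvne)
      have : (gfun a v - gfun a s) / (v - s) < 0 :=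
        div_neg_of_neg_of_pos (by rw [hgs0]; linarith [hvBad.2]) (by linarith)
      linarith
    · -- s < T : strict mono on [s,T]
      have hmono : StrictMonoOn (gfun a) (Set.Icc s T) := by
        apply strictMonoOn_of_deriv_pos (convex_Icc s T) (gfun_continuous a).continuousOn
        intro y hy
        rw [interior_Icc] at hy
        rw [(hasDerivAt_gfun a y).deriv]
        exact gfun_deriv_pos ha (hs.trans hy.1) (hpos_before y hy.1.le hy.2)
      have := hmono (Set.mem_Icc.2 ⟨le_refl s, hTs⟩) (Set.mem_Icc.2 ⟨hTs, le_refl T⟩) hlt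
      linarith
  have hmono : StrictMonoOn (gfun a) (Set.Ici s) := by
    apply strictMonoOn_of_deriv_pos (convex_Ici s) (gfun_continuous a).continuousOn
    intro y hy
    rw [interior_Ici] at hy
    rw [(hasDerivAt_gfun a y).deriv]
    exact gfun_deriv_pos ha (hs.trans hy) (key y hy.le)
  have := hmono (Set.mem_Ici.2 (le_refl s)) (Set.mem_Ici.2 hst.le) hst
  linarith

lemma integrable_gauss : Integrable (fun x : ℝ => Real.exp (-(x^2)/2)) := by
  have h := integrable_exp_neg_mul_sq (show (0:ℝ) < 1/2 by norm_num)
  refine h.congr ?_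
  filter_upwards with x
  congr 1; ring

lemma integral_gauss : ∫ x : ℝ, Real.exp (-(x^2)/2) = Real.sqrt (2*Real.pi) := by
  have h := integral_gaussian (1/2 : ℝ)
  rw [show Real.pi / (1/2 : ℝ) = 2*Real.pi by ring] at h
  rw [← h]
  congr 1; funext x; congr 1; ring

lemma integrable_abs_gauss : Integrable (fun x : ℝ => |x| * Real.exp (-(x^2)/2)) := by
  have h := integrable_rpow_mul_exp_neg_mul_sq (show (0:ℝ) < 1/2 by norm_num)
    (show (-1:ℝ) < 1 by norm_num)
  have h2 : Integrable (fun x : ℝ => x * Real.exp (-(x^2)/2)) := by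
    refine h.congr ?_
    filter_upwards with x
    rw [Real.rpow_one]
    congr 1; ring
  refine h2.abs.congr ?_
  filter_upwards with x
  rw [abs_mul, abs_of_pos (Real.exp_pos _)]

/-- the dominating function for the Marcum integrand -/
lemma integrable_dom {c : ℝ} (hc : 0 ≤ c) (d : ℝ) :
    Integrable (fun t : ℝ => (|t| + c) * Real.exp (-((t - d)^2)/2)) := by
  have hbase : Integrable (fun u : ℝ => (|u| + (|d| + c)) * Real.exp (-(u^2)/2)) := by
    have := integrable_abs_gauss.add (integrable_gauss.const_mul (|d| + c))
    refine this.congr ?_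
    filter_upwards with x
    simp only [Pi.add_apply]
    ring
  have hshift := hbase.comp_sub_right d
  refine hshift.mono ?_ ?_
  · apply Continuous.aestronglyMeasurable
    continuity
  · filter_upwards with t
    simp only [Real.norm_eq_abs]
    have he : (0:ℝ) < Real.exp (-((t - d)^2)/2) := Real.exp_pos _
    rw [abs_mul, abs_of_pos he, abs_mul, abs_of_pos he]
    apply mul_le_mul_of_nonneg_right _ he.le
    have h1 : |t| ≤ |t - d| + |d| := by
      calc |t| = |(t - d) + d| := by congr 1; ring
        _ ≤ |t - d| + |d| := abs_add_le _ _
    rw [abs_of_nonneg (add_nonneg (abs_nonneg t) hc),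
      abs_of_nonneg (add_nonneg (abs_nonneg (t-d)) (add_nonneg (abs_nonneg d) hc))]
    linarith

lemma inner_bessel (c : ℝ) :
    ∫ θ in Set.Ioo (-Real.pi) Real.pi, Real.exp (c * Real.cos θ)
      = 2 * Real.pi * besselI0 c := by
  have hpi := Real.pi_pos
  rw [← MeasureTheory.integral_Ioc_eq_integral_Ioo,
    ← intervalIntegral.integral_of_le (by linarith : -Real.pi ≤ Real.pi)]
  have hsplit : ∫ θ in (-Real.pi)..Real.pi, Real.exp (c * Real.cos θ)
      = (∫ θ in (-Real.pi)..(0:ℝ), Real.exp (c * Real.cos θ))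
        + ∫ θ in (0:ℝ)..Real.pi, Real.exp (c * Real.cos θ) := by
    rw [intervalIntegral.integral_add_adjacent_intervals] <;>
      (apply Continuous.intervalIntegrable; continuity)
  have hneg : ∫ θ in (-Real.pi)..(0:ℝ), Real.exp (c * Real.cos θ)
      = ∫ θ in (0:ℝ)..Real.pi, Real.exp (c * Real.cos θ) := by
    have h := intervalIntegral.integral_comp_neg (a := (0:ℝ)) (b := Real.pi)
      (fun θ => Real.exp (c * Real.cos θ))
    simp only [Real.cos_neg, neg_zero] at h
    rw [← h]
  rw [hsplit, hneg]
  unfold besselI0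
  field_simp
  ring

lemma factA {a : ℝ} (ha : 0 ≤ a) :
    ∫ t in Set.Ioi (0:ℝ), t * Real.exp (-(t^2 + a^2)/2) * besselI0 (a*t) = 1 := by
  have hpi := Real.pi_pos
  -- polar change of variables
  have hpolar := integral_comp_polarCoord_symm
    (fun v : ℝ×ℝ => Real.exp (-((v.1 - a)^2 + v.2^2)/2))
  -- RHS = 2π
  have hRHS : (∫ v : ℝ×ℝ, Real.exp (-((v.1 - a)^2 + v.2^2)/2)) = 2 * Real.pi := by
    have hfac : ∀ v : ℝ×ℝ, Real.exp (-((v.1 - a)^2 + v.2^2)/2)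
        = Real.exp (-((v.1 - a)^2)/2) * Real.exp (-(v.2^2)/2) := by
      intro v; rw [← Real.exp_add]; congr 1; ring
    calc (∫ v : ℝ×ℝ, Real.exp (-((v.1 - a)^2 + v.2^2)/2))
        = ∫ v : ℝ×ℝ, Real.exp (-((v.1 - a)^2)/2) * Real.exp (-(v.2^2)/2) := by
          congr 1; funext v; exact hfac v
      _ = (∫ x : ℝ, Real.exp (-((x - a)^2)/2)) * ∫ y : ℝ, Real.exp (-(y^2)/2) := by
          rw [MeasureTheory.Measure.volume_eq_prod, ← MeasureTheory.integral_prod_mul]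
      _ = (∫ x : ℝ, Real.exp (-(x^2)/2)) * ∫ y : ℝ, Real.exp (-(y^2)/2) := by
          have hs := MeasureTheory.integral_add_right_eq_self
            (μ := volume) (fun x : ℝ => Real.exp (-(x^2)/2)) (-a)
          have hs2 : (∫ x : ℝ, Real.exp (-((x - a)^2)/2)) = ∫ x : ℝ, Real.exp (-(x^2)/2) := by
            rw [← hs]
            rfl
          rw [hs2]
      _ = 2 * Real.pi := by
          rw [integral_gauss]
          exact Real.mul_self_sqrt (by positivity)
  -- integrand simplification
  have hint : ∀ p : ℝ×ℝ, p.1 • (fun v : ℝ×ℝ => Real.exp (-((v.1 - a)^2 + v.2^2)/2)) (polarCoord.symm p)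
      = p.1 * Real.exp (-(p.1^2 + a^2)/2) * Real.exp (a * p.1 * Real.cos p.2) := by
    intro p
    have hsymm : polarCoord.symm p = (p.1 * Real.cos p.2, p.1 * Real.sin p.2) := rfl
    rw [hsymm]
    simp only [smul_eq_mul]
    rw [mul_assoc, ← Real.exp_add]
    congr 2
    have hsc := Real.sin_sq_add_cos_sq p.2
    nlinarith [hsc]
  have htarget : polarCoord.target = Set.Ioi (0:ℝ) ×ˢ Set.Ioo (-Real.pi) Real.pi := rfl
  rw [htarget] at hpolar
  rw [hRHS] at hpolar
  have hfun : (∫ p in Set.Ioi (0:ℝ) ×ˢ Set.Ioo (-Real.pi) Real.pi,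
        p.1 • (fun v : ℝ×ℝ => Real.exp (-((v.1 - a)^2 + v.2^2)/2)) (polarCoord.symm p))
      = ∫ p in Set.Ioi (0:ℝ) ×ˢ Set.Ioo (-Real.pi) Real.pi,
        p.1 * Real.exp (-(p.1^2 + a^2)/2) * Real.exp (a * p.1 * Real.cos p.2) := by
    congr 1; funext p; exact hint p
  rw [hfun] at hpolar
  -- integrability of the polar integrand
  have hdom : IntegrableOn
      (fun p : ℝ×ℝ => (|p.1| + 0) * Real.exp (-((p.1 - a)^2)/2) * (1:ℝ))
      (Set.Ioi (0:ℝ) ×ˢ Set.Ioo (-Real.pi) Real.pi) volume := by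
    have h1 : Integrable (fun t : ℝ => (|t| + 0) * Real.exp (-((t - a)^2)/2))
        (volume.restrict (Set.Ioi (0:ℝ))) :=
      (integrable_dom le_rfl a).restrict
    have h2 : Integrable (fun _ : ℝ => (1:ℝ))
        (volume.restrict (Set.Ioo (-Real.pi) Real.pi)) := by
      apply integrable_const
    have := h1.mul_prod h2
    rw [Measure.prod_restrict] at this
    unfold IntegrableOn
    rw [MeasureTheory.Measure.volume_eq_prod]
    exact this
  have hFi : IntegrableOn
      (fun p : ℝ×ℝ => p.1 * Real.exp (-(p.1^2 + a^2)/2) * Real.exp (a * p.1 * Real.cos p.2))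
      (Set.Ioi (0:ℝ) ×ˢ Set.Ioo (-Real.pi) Real.pi) volume := by
    refine MeasureTheory.Integrable.mono hdom ?_ ?_
    · apply Continuous.aestronglyMeasurable
      fun_prop
    · rw [MeasureTheory.ae_restrict_iff' ((measurableSet_Ioi).prod measurableSet_Ioo)]
      filter_upwards with p hp
      obtain ⟨hr, hθ⟩ := hp
      have hr0 : (0:ℝ) < p.1 := hr
      have hcos : Real.cos p.2 ≤ 1 := Real.cos_le_one _
      have hexp : Real.exp (-(p.1^2 + a^2)/2) * Real.exp (a * p.1 * Real.cos p.2)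
          ≤ Real.exp (-((p.1 - a)^2)/2) := by
        rw [← Real.exp_add]
        apply Real.exp_le_exp.2
        nlinarith [mul_nonneg ha hr0.le]
      rw [Real.norm_eq_abs, Real.norm_eq_abs]
      have hpos1 : (0:ℝ) ≤ p.1 * Real.exp (-(p.1^2 + a^2)/2) * Real.exp (a * p.1 * Real.cos p.2) := by
        positivity
      rw [abs_of_nonneg hpos1]
      have hrhs : |(|p.1| + 0) * Real.exp (-((p.1 - a)^2)/2) * 1|
          = |p.1| * Real.exp (-((p.1 - a)^2)/2) := by
        rw [mul_one, add_zero, abs_mul, abs_abs, abs_of_pos (Real.exp_pos _)]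
      rw [hrhs, abs_of_pos hr0]
      calc p.1 * Real.exp (-(p.1^2 + a^2)/2) * Real.exp (a * p.1 * Real.cos p.2)
          = p.1 * (Real.exp (-(p.1^2 + a^2)/2) * Real.exp (a * p.1 * Real.cos p.2)) := by ring
        _ ≤ p.1 * Real.exp (-((p.1 - a)^2)/2) := by
            exact mul_le_mul_of_nonneg_left hexp hr0.le
  -- Fubini
  rw [MeasureTheory.Measure.volume_eq_prod] at hpolar hFi
  rw [MeasureTheory.setIntegral_prod _ hFi] at hpolar
  -- inner integral
  have hinner : ∀ r ∈ Set.Ioi (0:ℝ),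
      (∫ θ in Set.Ioo (-Real.pi) Real.pi,
        r * Real.exp (-(r^2 + a^2)/2) * Real.exp (a * r * Real.cos θ))
      = (2 * Real.pi) * (r * Real.exp (-(r^2 + a^2)/2) * besselI0 (a*r)) := by
    intro r _
    rw [MeasureTheory.integral_const_mul, inner_bessel (a*r)]
    ring_nf
  rw [MeasureTheory.setIntegral_congr_fun measurableSet_Ioi hinner] at hpolar
  rw [MeasureTheory.integral_const_mul] at hpolar
  have h2pi : (2 * Real.pi) ≠ 0 := by positivity
  exact mul_left_cancel₀ h2pi (by rw [mul_one]; exact hpolar)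

lemma besselI0_continuous : Continuous besselI0 :=
  Differentiable.continuous (fun x => (hasDerivAt_besselI0 x).differentiableAt)

lemma shift_Ioi (f : ℝ → ℝ) (b c : ℝ) :
    ∫ t in Set.Ioi b, f (t + c) = ∫ t in Set.Ioi (b + c), f t := by
  have h := MeasureTheory.integral_add_right_eq_self (μ := volume)
    (fun t => Set.indicator (Set.Ioi (b+c)) f t) c
  rw [MeasureTheory.integral_indicator measurableSet_Ioi] at h
  rw [← h, ← MeasureTheory.integral_indicator measurableSet_Ioi]
  congr 1
  funext t
  by_cases ht : t ∈ Set.Ioi b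
  · rw [Set.indicator_of_mem ht]
    rw [Set.indicator_of_mem (by simp only [Set.mem_Ioi] at ht ⊢; linarith)]
  · rw [Set.indicator_of_notMem ht,
      Set.indicator_of_notMem (by simp only [Set.mem_Ioi] at ht ⊢; linarith)]

lemma gaussQ_eq (b c : ℝ) : gaussQ (b + c)
    = (1/Real.sqrt (2*Real.pi)) * ∫ t in Set.Ioi b, Real.exp (-((t + c)^2)/2) := by
  unfold gaussQ
  congr 1
  rw [shift_Ioi (fun t => Real.exp (-(t^2)/2)) b c]

lemma gaussQ_compl (x : ℝ) : gaussQ x + gaussQ (-x) = 1 := by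
  unfold gaussQ
  have hB : (∫ t in Set.Ioi (-x), Real.exp (-(t^2)/2))
      = ∫ t in Set.Iic x, Real.exp (-(t^2)/2) := by
    have h := integral_comp_neg_Ioi (-x) (fun t => Real.exp (-(t^2)/2))
    simp only [neg_neg] at h
    rw [← h]
    congr 1
    funext t
    congr 2
    ring
  rw [hB, ← mul_add]
  have hsq : Real.sqrt (2*Real.pi) ≠ 0 := by positivity
  calc (1/Real.sqrt (2*Real.pi)) * ((∫ t in Set.Ioi x, Real.exp (-(t^2)/2))
        + ∫ t in Set.Iic x, Real.exp (-(t^2)/2))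
      = (1/Real.sqrt (2*Real.pi)) * ((∫ t in Set.Iic x, Real.exp (-(t^2)/2))
        + ∫ t in (Set.Iic x)ᶜ, Real.exp (-(t^2)/2)) := by rw [add_comm, Set.compl_Iic]
    _ = (1/Real.sqrt (2*Real.pi)) * ∫ t : ℝ, Real.exp (-(t^2)/2) := by
        rw [MeasureTheory.integral_add_compl measurableSet_Iic integrable_gauss]
    _ = 1 := by rw [integral_gauss]; field_simp

lemma gaussQ_pos (x : ℝ) : 0 < gaussQ x := by
  unfold gaussQ
  apply mul_pos (by positivity)
  rw [MeasureTheory.setIntegral_pos_iff_support_of_nonneg_ae]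
  · have hsup : Function.support (fun t : ℝ => Real.exp (-(t^2)/2)) = Set.univ := by
      ext t
      simp [Function.mem_support, (Real.exp_pos (-(t^2)/2)).ne']
    rw [hsup, Set.univ_inter, Real.volume_Ioi]
    simp
  · filter_upwards with t using (Real.exp_pos _).le
  · exact integrable_gauss.integrableOn

noncomputable def Ffun (a t : ℝ) : ℝ :=
  t * Real.exp (-(t ^ 2 + a ^ 2) / 2) * besselI0 (a * t)
    - Kc * (Real.exp (-(t ^ 2 + a ^ 2) / 2) * Real.cosh (a * t))

lemma Ffun_eq (a t : ℝ) : Ffun a t = Real.exp (-(t ^ 2 + a ^ 2) / 2) * gfun a t := by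
  unfold Ffun gfun; ring

lemma marcum_integrableOn {a : ℝ} (ha : 0 ≤ a) :
    IntegrableOn (fun t : ℝ => t * Real.exp (-(t ^ 2 + a ^ 2) / 2) * besselI0 (a * t))
      (Set.Ioi 0) volume := by
  refine MeasureTheory.Integrable.mono ((integrable_dom le_rfl a).restrict) ?_ ?_
  · have hcont : Continuous (fun t : ℝ => t * Real.exp (-(t ^ 2 + a ^ 2) / 2) * besselI0 (a * t)) := by
      apply Continuous.mul
      · apply Continuous.mul continuous_id
        apply Real.continuous_exp.comp
        fun_prop
      · exact besselI0_continuous.comp (continuous_const.mul continuous_id)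
    exact hcont.aestronglyMeasurable.restrict
  · rw [MeasureTheory.ae_restrict_iff' measurableSet_Ioi]
    filter_upwards with t ht
    have ht0 : (0:ℝ) < t := ht
    have hI0pos := besselI0_pos (a*t)
    have hI0le := besselI0_le (mul_nonneg ha ht0.le)
    rw [Real.norm_eq_abs, Real.norm_eq_abs, abs_of_nonneg (by positivity)]
    have h1 : |(|t| + 0) * Real.exp (-((t - a)^2)/2)| = |t| * Real.exp (-((t-a)^2)/2) := by
      rw [add_zero, abs_mul, abs_abs, abs_of_pos (Real.exp_pos _)]
    rw [h1, abs_of_pos ht0]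
    calc t * Real.exp (-(t^2 + a^2)/2) * besselI0 (a*t)
        ≤ t * Real.exp (-(t^2 + a^2)/2) * Real.exp (a*t) :=
          mul_le_mul_of_nonneg_left hI0le (by positivity)
      _ = t * Real.exp (-((t - a)^2)/2) := by
          rw [mul_assoc, ← Real.exp_add]; congr 2; ring

lemma cosh_integrableOn {a : ℝ} (ha : 0 ≤ a) :
    IntegrableOn (fun t : ℝ => Kc * (Real.exp (-(t ^ 2 + a ^ 2) / 2) * Real.cosh (a * t)))
      (Set.Ioi 0) volume := by
  refine MeasureTheory.Integrable.mono ((integrable_dom Kc_pos.le a).restrict) ?_ ?_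
  · have hcont : Continuous (fun t : ℝ => Kc * (Real.exp (-(t ^ 2 + a ^ 2) / 2) * Real.cosh (a * t))) := by
      apply Continuous.mul continuous_const
      apply Continuous.mul
      · apply Real.continuous_exp.comp; fun_prop
      · exact Real.continuous_cosh.comp (continuous_const.mul continuous_id)
    exact hcont.aestronglyMeasurable.restrict
  · rw [MeasureTheory.ae_restrict_iff' measurableSet_Ioi]
    filter_upwards with t ht
    have ht0 : (0:ℝ) < t := ht
    have hat : (0:ℝ) ≤ a * t := mul_nonneg ha ht0.le
    have hcosh : Real.cosh (a*t) ≤ Real.exp (a*t) := by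
      rw [Real.cosh_eq]
      have := Real.exp_le_exp.2 (by linarith : -(a*t) ≤ a*t)
      linarith
    rw [Real.norm_eq_abs, Real.norm_eq_abs, abs_of_nonneg
      (mul_nonneg Kc_pos.le (mul_nonneg (Real.exp_pos _).le (Real.cosh_pos _).le))]
    have h1 : |(|t| + Kc) * Real.exp (-((t - a)^2)/2)| = (|t| + Kc) * Real.exp (-((t-a)^2)/2) := by
      rw [abs_mul, abs_of_pos (Real.exp_pos _),
        abs_of_nonneg (add_nonneg (abs_nonneg t) Kc_pos.le)]
    rw [h1]
    calc Kc * (Real.exp (-(t^2 + a^2)/2) * Real.cosh (a*t))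
        ≤ Kc * (Real.exp (-(t^2 + a^2)/2) * Real.exp (a*t)) := by
          apply mul_le_mul_of_nonneg_left _ Kc_pos.le
          exact mul_le_mul_of_nonneg_left hcosh (Real.exp_pos _).le
      _ = Kc * Real.exp (-((t - a)^2)/2) := by
          rw [← Real.exp_add]; congr 2; ring
      _ ≤ (|t| + Kc) * Real.exp (-((t - a)^2)/2) := by
          apply mul_le_mul_of_nonneg_right _ (Real.exp_pos _).le
          have h2 := abs_nonneg t
          linarith

lemma Ffun_integrableOn {a : ℝ} (ha : 0 ≤ a) :
    IntegrableOn (Ffun a) (Set.Ioi 0) volume :=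
  (marcum_integrableOn ha).sub (cosh_integrableOn ha)

lemma gauss_sum_eq {a : ℝ} (b : ℝ) :
    gaussQ (b + a) + gaussQ (b - a)
      = ∫ t in Set.Ioi b, Kc * (Real.exp (-(t ^ 2 + a ^ 2) / 2) * Real.cosh (a * t)) := by
  have hi1 : Integrable (fun t : ℝ => Real.exp (-((t + a)^2)/2)) := by
    have := integrable_gauss.comp_sub_right (-a)
    refine this.congr ?_
    filter_upwards with t
    congr 2
    ring
  have hi2 : Integrable (fun t : ℝ => Real.exp (-((t + -a)^2)/2)) :=
    integrable_gauss.comp_sub_right a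
  rw [gaussQ_eq b a, show b - a = b + (-a) by ring, gaussQ_eq b (-a)]
  rw [← mul_add, ← MeasureTheory.integral_add hi1.integrableOn hi2.integrableOn,
    ← MeasureTheory.integral_const_mul]
  apply MeasureTheory.setIntegral_congr_fun measurableSet_Ioi
  intro t _
  simp only
  rw [Real.cosh_eq]
  have h1 : Real.exp (-((t + a)^2)/2) = Real.exp (-(t^2+a^2)/2) * Real.exp (-(a*t)) := by
    rw [← Real.exp_add]; congr 1; ring
  have h2 : Real.exp (-((t + -a)^2)/2) = Real.exp (-(t^2+a^2)/2) * Real.exp (a*t) := by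
    rw [← Real.exp_add]; congr 1; ring
  rw [h1, h2]
  unfold Kc
  have hsq : Real.sqrt (2*Real.pi) ≠ 0 := by positivity
  field_simp
  ring

/-- Lower bound on the Marcum Q function: for `a ≥ 0` and `b > 0`,
`Q₁(a,b) > Q(b+a) + Q(b−a)`, and in particular `Q₁(a,b) > Q(b−a)`. -/
theorem stmt_6 (a b : ℝ) (ha : 0 ≤ a) (hb : 0 < b) :
    gaussQ (b + a) + gaussQ (b - a) < marcumQ a b ∧ gaussQ (b - a) < marcumQ a b := by
  have hsub : Set.Ioi b ⊆ Set.Ioi (0:ℝ) := Set.Ioi_subset_Ioi hb.le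
  have hFi0 := Ffun_integrableOn ha
  have hFib : IntegrableOn (Ffun a) (Set.Ioi b) volume := hFi0.mono_set hsub
  have hMib : IntegrableOn
      (fun t : ℝ => t * Real.exp (-(t ^ 2 + a ^ 2) / 2) * besselI0 (a * t))
      (Set.Ioi b) volume := (marcum_integrableOn ha).mono_set hsub
  have hCib : IntegrableOn
      (fun t : ℝ => Kc * (Real.exp (-(t ^ 2 + a ^ 2) / 2) * Real.cosh (a * t)))
      (Set.Ioi b) volume := (cosh_integrableOn ha).mono_set hsub
  have hdiff : marcumQ a b - (gaussQ (b + a) + gaussQ (b - a))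
      = ∫ t in Set.Ioi b, Ffun a t := by
    rw [gauss_sum_eq b]
    unfold marcumQ
    rw [← MeasureTheory.integral_sub hMib hCib]
    rfl
  have hzero : ∫ t in Set.Ioi (0:ℝ), Ffun a t = 0 := by
    unfold Ffun
    rw [MeasureTheory.integral_sub (marcum_integrableOn ha) (cosh_integrableOn ha),
      factA ha, ← gauss_sum_eq 0, zero_add, zero_sub, gaussQ_compl a]
    ring
  have hpos : 0 < ∫ t in Set.Ioi b, Ffun a t := by
    by_cases hex : ∃ s, s ∈ Set.Ioc (0:ℝ) b ∧ 0 ≤ gfun a s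
    · obtain ⟨s, hs, hgs⟩ := hex
      have hgt : ∀ t, b < t → 0 < gfun a t := fun t htb =>
        single_crossing ha hs.1 hgs (lt_of_le_of_lt hs.2 htb)
      have hun : Set.Ioc b (b+1) ∪ Set.Ioi (b+1) = Set.Ioi b :=
        Set.Ioc_union_Ioi_eq_Ioi (by linarith)
      have hsub1 : Set.Ioc b (b+1) ⊆ Set.Ioi (0:ℝ) := fun t ht => lt_trans hb ht.1
      have hsub2 : Set.Ioi (b+1) ⊆ Set.Ioi (0:ℝ) := Set.Ioi_subset_Ioi (by linarith)
      rw [← hun, MeasureTheory.setIntegral_union Set.Ioc_disjoint_Ioi_same measurableSet_Ioi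
        (hFi0.mono_set hsub1) (hFi0.mono_set hsub2)]
      have h1 : 0 < ∫ t in Set.Ioc b (b+1), Ffun a t := by
        rw [← intervalIntegral.integral_of_le (by linarith : b ≤ b+1)]
        apply intervalIntegral.intervalIntegral_pos_of_pos_on
        · rw [intervalIntegrable_iff_integrableOn_Ioc_of_le (by linarith : b ≤ b+1)]
          exact hFi0.mono_set hsub1
        · intro t ht
          rw [Ffun_eq]
          exact mul_pos (Real.exp_pos _) (hgt t ht.1)
        · linarith
      have h2 : 0 ≤ ∫ t in Set.Ioi (b+1), Ffun a t := by
        apply MeasureTheory.setIntegral_nonneg measurableSet_Ioi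
        intro t ht
        rw [Ffun_eq]
        have htb : b < t := by
          have : b + 1 < t := ht
          linarith
        exact (mul_pos (Real.exp_pos _) (hgt t htb)).le
      linarith
    · push_neg at hex
      have hsplit : (∫ t in Set.Ioc 0 b, Ffun a t) + ∫ t in Set.Ioi b, Ffun a t = 0 := by
        rw [← MeasureTheory.setIntegral_union Set.Ioc_disjoint_Ioi_same measurableSet_Ioi
          (hFi0.mono_set Set.Ioc_subset_Ioi_self) hFib, Set.Ioc_union_Ioi_eq_Ioi hb.le]
        exact hzero
      have hneg : ∫ t in Set.Ioc 0 b, Ffun a t < 0 := by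
        have hpos' : 0 < ∫ t in (0:ℝ)..b, -Ffun a t := by
          apply intervalIntegral.intervalIntegral_pos_of_pos_on
          · rw [intervalIntegrable_iff_integrableOn_Ioc_of_le hb.le]
            exact ((hFi0.mono_set Set.Ioc_subset_Ioi_self)).neg
          · intro t ht
            rw [Ffun_eq]
            have hneg1 : gfun a t < 0 := hex t ⟨ht.1, ht.2.le⟩
            have := Real.exp_pos (-(t ^ 2 + a ^ 2) / 2)
            nlinarith
          · exact hb
        rw [intervalIntegral.integral_neg, intervalIntegral.integral_of_le hb.le] at hpos'
        linarith
      linarith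
  have hgqpos := gaussQ_pos (b + a)
  constructor
  · linarith
  · linarith
end
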